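/- Let N, Ñ be admissible algebras with admissible projections π, π̃ and associated hypersurfaces S = S_π, S̃ = S_{π̃}. If L : N → Ñ is an algebra isomorphism, then there exists c ∈ S such that S̃ = L(S − c). -/

import Mathlib

/-- `pw F N k` is the characteristic ideal `N^k`. -/
def pw (F N : Type*) [Field F] [NonUnitalNonAssocRing N] [Module F N] : ℕ → Submodule F N
  | 0 => ⊤
  | 1 => ⊤
  | (k+2) => Submodule.span F {z : N | ∃ x : N, ∃ y ∈ pw F N (k+1), z = x * y}

/-- The annihilator `Ann(N) = {x | x·N = 0}` of a commutative algebra `N`. -/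
def annSub (F N : Type*) [Field F] [NonUnitalCommRing N] [Module F N]
    [SMulCommClass F N N] [IsScalarTower F N N] : Submodule F N where
  carrier := {x | ∀ y : N, x * y = 0}
  add_mem' := by intro a b ha hb y; simp [add_mul, ha y, hb y]
  zero_mem' := by intro y; simp
  smul_mem' := by intro c x hx y; rw [smul_mul_assoc, hx y, smul_zero]

/-- `npw x k = x^(k+1)` in a non-unital ring. -/
def npw {N : Type*} [Mul N] (x : N) : ℕ → N
  | 0 => x
  | (k+1) => x * npw x k

/-- The truncated exponential `exp₁ x = Σ_{k=1}^{m} x^k/k!`. -/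
noncomputable def exp1 (F : Type*) {N : Type*} [Field F] [NonUnitalNonAssocRing N]
    [Module F N] (m : ℕ) (x : N) : N :=
  ∑ k ∈ Finset.range m, ((Nat.factorial (k + 1) : F))⁻¹ • npw x k

/-!
Transporting `π̃` along `L` gives a second projection `ρ = L⁻¹ π̃ L` onto the line `Ann(N)`.
Since `(x, w) ↦ π (x w)` is nondegenerate modulo `Ann(N)`, `π - ρ = π (· * w)` for some `w` with
`π w = 0`. In the unitization `exp₁ x + 1` is the exponential of `x`, so
`exp₁ (x + y) = exp₁ x + exp₁ y + exp₁ x * exp₁ y`, and a filtration argument makes `exp₁`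
surjective. Choosing `exp₁ c = -w` gives `π (exp₁ (y + c)) = ρ (exp₁ y)`, i.e. `S_ρ = S - c`,
and `S_ρ = L⁻¹ S̃`.
-/

section Filtration

variable {F N : Type*} [Field F] [NonUnitalCommRing N] [Module F N]

theorem mul_mem_pw_succ {k : ℕ} {x : N} (hx : x ∈ pw F N k) (y : N) : x * y ∈ pw F N (k + 1) := by
  cases k with
  | zero => trivial
  | succ k => exact Submodule.subset_span ⟨y, x, hx, mul_comm x y⟩

theorem pw_antitone : Antitone (pw F N) := by
  refine antitone_nat_of_succ_le fun k => ?_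
  induction k with
  | zero => exact le_top
  | succ k ih =>
    cases k with
    | zero => exact le_top
    | succ k =>
      refine Submodule.span_mono ?_
      rintro _ ⟨x, y, hy, rfl⟩
      exact ⟨x, y, ih hy, rfl⟩

theorem npw_mem_pw (x : N) (k : ℕ) : npw x k ∈ pw F N (k + 1) := by
  induction k with
  | zero => trivial
  | succ k ih => simpa only [npw, mul_comm x] using mul_mem_pw_succ ih x

theorem npw_eq_zero {ν k : ℕ} (hnil : pw F N (ν + 1) = ⊥) (hk : ν ≤ k) (x : N) : npw x k = 0 := by
  simpa [hnil] using pw_antitone (by omega : ν + 1 ≤ k + 1) (npw_mem_pw (F := F) x k)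

end Filtration

section Exponential

variable {F N : Type*} [Field F] [NonUnitalCommRing N] [Module F N]

theorem exp1_eq_of_le {ν m : ℕ} (hnil : pw F N (ν + 1) = ⊥) (hm : ν ≤ m) (x : N) :
    exp1 F m x = exp1 F ν x :=
  (Finset.sum_subset (Finset.range_subset_range.mpr hm) fun k _ hk => by
    rw [npw_eq_zero hnil (by simpa using hk), smul_zero]).symm

theorem exp1_sub_self_mem_pw {m j : ℕ} (hm : 1 ≤ m) {d : N} (hd : d ∈ pw F N j) :
    exp1 F m d - d ∈ pw F N (j + 1) := by
  obtain ⟨m, rfl⟩ := Nat.exists_eq_add_of_le' hm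
  rw [exp1, Finset.sum_range_succ', Nat.zero_add, Nat.factorial_one, Nat.cast_one, inv_one,
    one_smul, npw, add_sub_cancel_right]
  exact Submodule.sum_mem _ fun k _ => Submodule.smul_mem _ _ (by
    simpa only [npw, mul_comm d] using mul_mem_pw_succ hd (npw d k))

theorem exp1_mem_pw {m j : ℕ} (hm : 1 ≤ m) {d : N} (hd : d ∈ pw F N j) :
    exp1 F m d ∈ pw F N j := by
  simpa using add_mem hd (pw_antitone j.le_succ (exp1_sub_self_mem_pw (F := F) hm hd))

theorem map_exp1 {N' : Type*} [NonUnitalCommRing N'] [Module F N'] (f : N →ₗ[F] N')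
    (hf : ∀ x y, f (x * y) = f x * f y) (m : ℕ) (x : N) : f (exp1 F m x) = exp1 F m (f x) := by
  have hnpw : ∀ k, f (npw x k) = npw (f x) k := by
    intro k
    induction k with
    | zero => rfl
    | succ k ih => rw [npw, hf, ih, npw]
  simp only [exp1, map_sum, map_smul, hnpw]

end Exponential

section Unitization

variable {F N : Type*} [Field F] [NonUnitalCommRing N] [Module F N]
  [SMulCommClass F N N] [IsScalarTower F N N]

theorem inr_npw (x : N) (k : ℕ) :
    ((npw x k : N) : Unitization F N) = (x : Unitization F N) ^ (k + 1) := by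
  induction k with
  | zero => simp [npw]
  | succ k ih => rw [npw, Unitization.inr_mul, ih, ← pow_succ']

theorem inr_exp1_add_one (m : ℕ) (x : N) :
    ((exp1 F m x : N) : Unitization F N) + 1
      = ∑ k ∈ Finset.range (m + 1), ((k.factorial : F))⁻¹ • (x : Unitization F N) ^ k := by
  have h : ((∑ k ∈ Finset.range m, ((k + 1).factorial : F)⁻¹ • npw x k : N) : Unitization F N)
      = ∑ k ∈ Finset.range m, ((k + 1).factorial : F)⁻¹ • ((npw x k : N) : Unitization F N) :=
    map_sum (Unitization.inrNonUnitalAlgHom F N) _ _ |>.trans (by simp only [map_smul]; rfl)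
  rw [Finset.sum_range_succ', exp1, h]
  simp [inr_npw]

theorem exp1_add [CharZero F] {ν m : ℕ} (hnil : pw F N (ν + 1) = ⊥) (hm : ν ≤ m) (x y : N) :
    exp1 F m (x + y) = exp1 F m x + exp1 F m y + exp1 F m x * exp1 F m y := by
  -- in the unitization, `exp1 z + 1` is `IsNilpotent.exp z` for `ℚ` acting through `F`
  let _ : Module ℚ (Unitization F N) := Module.compHom _ (algebraMap ℚ F)
  have hpow : ∀ z : N, (z : Unitization F N) ^ (m + 1) = 0 := fun z => by
    rw [← inr_npw, npw_eq_zero hnil hm, Unitization.inr_zero]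
  have hexp : ∀ z : N,
      ((exp1 F m z : N) : Unitization F N) + 1 = IsNilpotent.exp (z : Unitization F N) := by
    intro z
    rw [IsNilpotent.exp_eq_sum (hpow z), inr_exp1_add_one]
    refine Finset.sum_congr rfl fun k _ => ?_
    rw [← map_natCast (algebraMap ℚ F), ← map_inv₀]
    rfl
  have := IsNilpotent.exp_add_of_commute (Commute.all _ _) ⟨_, hpow x⟩ ⟨_, hpow y⟩
  rw [← Unitization.inr_add, ← hexp, ← hexp, ← hexp] at this
  apply Unitization.inr_injective (R := F)
  push_cast
  linear_combination this

theorem exp1_surjective [CharZero F] {ν : ℕ} (hnil : pw F N (ν + 1) = ⊥) :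
    Function.Surjective (exp1 F ν : N → N) := by
  intro v
  have happrox : ∀ i, ∃ c : N, v - exp1 F (ν + 1) c ∈ pw F N i := by
    intro i
    induction i with
    | zero => exact ⟨0, trivial⟩
    | succ i ih =>
      obtain ⟨c, hc⟩ := ih
      obtain ⟨d, rfl⟩ : ∃ d, v = exp1 F (ν + 1) c + d := ⟨_, (add_sub_cancel _ v).symm⟩
      rw [add_sub_cancel_left] at hc
      refine ⟨c + d, ?_⟩
      have hsplit : exp1 F (ν + 1) c + d - exp1 F (ν + 1) (c + d)
          = -(exp1 F (ν + 1) d - d) - exp1 F (ν + 1) d * exp1 F (ν + 1) c := by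
        rw [exp1_add hnil (Nat.le_add_right ν 1), mul_comm (exp1 F _ d)]
        abel
      rw [hsplit]
      exact sub_mem (neg_mem (exp1_sub_self_mem_pw ν.succ_pos hc))
        (mul_mem_pw_succ (exp1_mem_pw ν.succ_pos hc) _)
  obtain ⟨c, hc⟩ := happrox (ν + 1)
  rw [hnil, Submodule.mem_bot, sub_eq_zero, exp1_eq_of_le hnil ν.le_succ] at hc
  exact ⟨c, hc.symm⟩

end Unitization

section Annihilator

variable {F N : Type*} [Field F] [NonUnitalCommRing N] [Module F N]
  [SMulCommClass F N N] [IsScalarTower F N N]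

theorem exists_mul_mem_annSub_ne_zero {ν : ℕ} (hnil : pw F N (ν + 1) = ⊥) {x : N}
    (hx : x ∉ annSub F N) : ∃ y, x * y ∈ annSub F N ∧ x * y ≠ 0 := by
  classical
  -- the deepest level of the filtration that `x * N` reaches is annihilated by `N`
  have hex : ∃ k, ∀ y, x * y ∈ pw F N k → x * y = 0 := ⟨ν + 1, by simp [hnil]⟩
  obtain ⟨k, hk⟩ : ∃ k, Nat.find hex = k + 1 :=
    Nat.exists_eq_succ_of_ne_zero fun h0 => hx fun y => (h0 ▸ Nat.find_spec hex) y trivial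
  obtain ⟨y, hy, hne⟩ : ∃ y, x * y ∈ pw F N k ∧ x * y ≠ 0 := by
    simpa using Nat.find_min hex (by omega : k < Nat.find hex)
  refine ⟨y, fun z => ?_, hne⟩
  rw [mul_assoc]
  exact (hk ▸ Nat.find_spec hex) _ (by simpa only [mul_assoc] using mul_mem_pw_succ hy z)

theorem isProj_annSub {π : N →ₗ[F] N} (hproj : π ∘ₗ π = π)
    (hrange : LinearMap.range π = annSub F N) :
    LinearMap.IsProj (annSub F N) π :=
  hrange ▸ (π.isProj_range_iff_isIdempotentElem).mpr hproj

theorem map_mem_annSub_iff {N' : Type*} [NonUnitalCommRing N'] [Module F N']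
    [SMulCommClass F N' N'] [IsScalarTower F N' N'] (L : N ≃ₗ[F] N')
    (hmul : ∀ x y, L (x * y) = L x * L y) {a : N} : L a ∈ annSub F N' ↔ a ∈ annSub F N := by
  refine ⟨fun h y => L.injective ?_, fun h y => ?_⟩
  · rw [hmul, map_zero, h]
  · rw [← L.apply_symm_apply y, ← hmul, h, map_zero]

theorem isProj_annSub_symm_conj {N' : Type*} [NonUnitalCommRing N'] [Module F N']
    [SMulCommClass F N' N'] [IsScalarTower F N' N'] (L : N ≃ₗ[F] N')
    (hmul : ∀ x y, L (x * y) = L x * L y) {π' : N' →ₗ[F] N'}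
    (hπ' : LinearMap.IsProj (annSub F N') π') : LinearMap.IsProj (annSub F N) (L.symm.conj π') where
  map_mem x := (map_mem_annSub_iff L hmul).mp (by
    simpa [LinearEquiv.conj_apply] using hπ'.map_mem (L x))
  map_id a ha := by
    simp [LinearEquiv.conj_apply, hπ'.map_id _ ((map_mem_annSub_iff L hmul).mpr ha)]

end Annihilator

section Duality

variable {F N : Type*} [Field F] [NonUnitalCommRing N] [Module F N]
  [SMulCommClass F N N] [IsScalarTower F N N] [FiniteDimensional F N]

/-- The pairing `(x, w) ↦ φ (x * w)` has kernel `Ann(N)`, so by counting dimensions it realizes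
every functional vanishing on `Ann(N)`. -/
theorem exists_apply_eq_apply_mul {ν : ℕ} (hnil : pw F N (ν + 1) = ⊥) (φ : Module.Dual F N)
    (hφ : ∀ a ∈ annSub F N, φ a = 0 → a = 0) {χ : Module.Dual F N}
    (hχ : χ ∈ (annSub F N).dualAnnihilator) : ∃ w, ∀ x, χ x = φ (x * w) := by
  set T : N →ₗ[F] Module.Dual F N := ((LinearMap.mul F N).compr₂ φ).flip
  have hT : ∀ w x, T w x = φ (x * w) := fun _ _ => rfl
  have hker : LinearMap.ker T = annSub F N := by
    ext w
    refine ⟨fun hw => by_contra fun hw' => ?_, fun hw => LinearMap.ext fun x => ?_⟩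
    · obtain ⟨y, hy, hne⟩ := exists_mul_mem_annSub_ne_zero hnil hw'
      refine hne (hφ _ hy ?_)
      rw [mul_comm, ← hT, LinearMap.mem_ker.mp hw, LinearMap.zero_apply]
    · rw [hT, mul_comm, hw x, map_zero, LinearMap.zero_apply]
  have hle : LinearMap.range T ≤ (annSub F N).dualAnnihilator := by
    rintro _ ⟨w, rfl⟩
    exact (Submodule.mem_dualAnnihilator _).mpr fun a ha => by rw [hT, ha w, map_zero]
  have hrange : LinearMap.range T = (annSub F N).dualAnnihilator := by
    refine Submodule.eq_of_le_of_finrank_eq hle ?_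
    have := T.finrank_range_add_finrank_ker
    have := Subspace.finrank_add_finrank_dualAnnihilator_eq (annSub F N)
    rw [hker] at *
    omega
  obtain ⟨w, hw⟩ := hrange ▸ hχ
  exact ⟨w, fun x => by rw [← hw, hT]⟩

theorem exists_proj_mul_eq_sub_proj {ν : ℕ} (hnil : pw F N (ν + 1) = ⊥)
    (hAnn : Module.finrank F (annSub F N) = 1) {π ρ : N →ₗ[F] N}
    (hπ : LinearMap.IsProj (annSub F N) π) (hρ : LinearMap.IsProj (annSub F N) ρ) :
    ∃ w, π w = 0 ∧ ∀ x, π (x * w) = π x - ρ x := by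
  let e : annSub F N ≃ₗ[F] F := LinearEquiv.ofFinrankEq _ _ (by rw [hAnn, Module.finrank_self])
  let φ : Module.Dual F N := e.toLinearMap ∘ₗ hπ.codRestrict
  have hφ : ∀ u v, φ u = φ v ↔ π u = π v := fun u v => by
    simp [φ, Subtype.ext_iff]
  obtain ⟨w, hw⟩ := exists_apply_eq_apply_mul hnil φ
    (fun a ha h0 => by rwa [← map_zero φ, hφ, map_zero, hπ.map_id a ha] at h0)
    (χ := φ ∘ₗ (π - ρ)) ((Submodule.mem_dualAnnihilator _).mpr fun a ha => by
      simp [hπ.map_id a ha, hρ.map_id a ha])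
  refine ⟨w - π w, by rw [map_sub, hπ.map_id _ (hπ.map_mem w), sub_self], fun x => ?_⟩
  have hx := (hφ _ _).mp (hw x)
  rw [LinearMap.sub_apply, hπ.map_id _ (sub_mem (hπ.map_mem x) (hρ.map_mem x))] at hx
  rw [mul_sub, mul_comm x (π w), hπ.map_mem w x, sub_zero, ← hx]

end Duality

theorem stmt11_general {F N N' : Type*} [Field F] [CharZero F]
    [NonUnitalCommRing N] [Module F N] [SMulCommClass F N N] [IsScalarTower F N N]
    [FiniteDimensional F N]
    [NonUnitalCommRing N'] [Module F N'] [SMulCommClass F N' N'] [IsScalarTower F N' N']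
    (hAnn : Module.finrank F (annSub F N) = 1)
    (ν ν' : ℕ) (hnil : pw F N (ν + 1) = ⊥) (hnil' : pw F N' (ν' + 1) = ⊥)
    (π : N →ₗ[F] N) (hproj : π ∘ₗ π = π) (hrange : LinearMap.range π = annSub F N)
    (π' : N' →ₗ[F] N') (hproj' : π' ∘ₗ π' = π')
    (hrange' : LinearMap.range π' = annSub F N')
    (L : N ≃ₗ[F] N') (hmul : ∀ x y : N, L (x * y) = L x * L y) :
    ∃ c : N, π (exp1 F ν c) = 0 ∧
      ∀ z : N', π' (exp1 F ν' z) = 0 ↔ ∃ x : N, π (exp1 F ν x) = 0 ∧ z = L (x - c) := by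
  obtain ⟨w, hπw, hw⟩ := exists_proj_mul_eq_sub_proj hnil hAnn (isProj_annSub hproj hrange)
    (isProj_annSub_symm_conj L hmul (isProj_annSub hproj' hrange'))
  obtain ⟨c, hc⟩ := exp1_surjective hnil (-w)
  have hshift : ∀ y, π (exp1 F ν (y + c)) = L.symm.conj π' (exp1 F ν y) := fun y => by
    rw [exp1_add hnil le_rfl, hc, mul_neg, map_add, map_add, map_neg, map_neg, hπw, hw]
    abel
  have hL : ∀ z, exp1 F ν' z = L (exp1 F ν (L.symm z)) := fun z => by
    have := map_exp1 (L : N →ₗ[F] N') hmul (ν + ν') (L.symm z)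
    rw [LinearEquiv.coe_coe, L.apply_symm_apply] at this
    rw [← exp1_eq_of_le hnil' (Nat.le_add_left ν' ν), ← exp1_eq_of_le hnil (Nat.le_add_right ν ν'),
      this]
  have hS : ∀ z, π' (exp1 F ν' z) = 0 ↔ π (exp1 F ν (L.symm z + c)) = 0 := fun z => by
    rw [hshift, LinearEquiv.conj_apply, LinearMap.comp_apply, LinearMap.comp_apply,
      LinearEquiv.coe_coe, LinearEquiv.coe_coe, LinearEquiv.symm_symm, ← hL,
      LinearEquiv.map_eq_zero_iff]
  refine ⟨c, by rw [hc, map_neg, hπw, neg_zero], fun z => (hS z).trans ?_⟩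
  refine ⟨fun h => ⟨_, h, by simp⟩, ?_⟩
  rintro ⟨x, hx, rfl⟩
  simpa using hx

/-- Let `N`, `Ñ` be admissible algebras with admissible projections `π`, `π̃`
and hypersurfaces `S = S_π`, `S̃ = S_{π̃}`.  If `L : N → Ñ` is an algebra isomorphism, then
there exists `c ∈ S` with `S̃ = L(S − c)`. -/
theorem stmt11 {F N N' : Type*} [Field F] [CharZero F]
    [NonUnitalCommRing N] [Module F N] [SMulCommClass F N N] [IsScalarTower F N N]
    [FiniteDimensional F N]
    [NonUnitalCommRing N'] [Module F N'] [SMulCommClass F N' N'] [IsScalarTower F N' N']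
    [FiniteDimensional F N']
    (hAnn : Module.finrank F (annSub F N) = 1)
    (hAnn' : Module.finrank F (annSub F N') = 1)
    (ν ν' : ℕ) (hnil : pw F N (ν + 1) = ⊥) (hnil' : pw F N' (ν' + 1) = ⊥)
    (π : N →ₗ[F] N) (hproj : π ∘ₗ π = π) (hrange : LinearMap.range π = annSub F N)
    (π' : N' →ₗ[F] N') (hproj' : π' ∘ₗ π' = π')
    (hrange' : LinearMap.range π' = annSub F N')
    (L : N ≃ₗ[F] N') (hmul : ∀ x y : N, L (x * y) = L x * L y) :
    ∃ c : N, π (exp1 F ν c) = 0 ∧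
      ∀ z : N', π' (exp1 F ν' z) = 0 ↔ ∃ x : N, π (exp1 F ν x) = 0 ∧ z = L (x - c) :=
  stmt11_general hAnn ν ν' hnil hnil' π hproj hrange π' hproj' hrange' L hmul
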